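/- arXiv:1612.08769 — 6 statements merged into one kernel-verified Lean document; each statement's English description precedes it below -/
import Mathlib

section
/- Let G be a finite group with exactly 3 conjugacy classes. Then G is isomorphic to the cyclic group Z/3 or to the symmetric group S3. Conversely, both of these groups have exactly 3 conjugacy classes. -/
open Subgroup

/-- `Equiv.permCongr` as a `MulEquiv`. -/
def permCongrMulEquivAux {α β : Type*} (e : α ≃ β) : Equiv.Perm α ≃* Equiv.Perm β where
  toEquiv := e.permCongr
  map_mul' p q := by
    ext x
    simp [Equiv.permCongr_apply, Equiv.Perm.mul_apply]

lemma arith_lemma_aux {n a b : ℕ} (ha : 0 < a) (hab : a ≤ b) (han : a ∣ n) (hbn : b ∣ n)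
    (h : 1 + a + b = n) : n = 3 ∨ n = 4 ∨ n = 6 := by
  obtain ⟨k, hk⟩ := hbn
  have hb : 0 < b := lt_of_lt_of_le ha hab
  have hk2 : 2 ≤ k := by rcases k with _ | _ | k <;> omega
  rcases Nat.lt_or_ge k 3 with h2 | h3
  · have hk2' : k = 2 := by omega
    subst hk2'
    have hba : b = 1 + a := by omega
    have h2a : a ∣ 2 := by
      have h1 : a ∣ 2 * a := dvd_mul_left a 2
      have hn : n = 2 * a + 2 := by omega
      have := Nat.dvd_sub han h1
      rwa [hn, Nat.add_sub_cancel_left] at this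
    have ha2 : a ≤ 2 := Nat.le_of_dvd (by norm_num) h2a
    interval_cases a <;> omega
  · have h3b : 3 * b ≤ n := by
      calc 3 * b = b * 3 := by ring
        _ ≤ b * k := Nat.mul_le_mul_left b h3
        _ = n := hk.symm
    omega

lemma card_conjClasses_of_comm_aux (G : Type) [Group G] (h : ∀ a b : G, a * b = b * a) :
    Nat.card (ConjClasses G) = Nat.card G := by
  letI : CommGroup G := { (inferInstance : Group G) with mul_comm := h }
  exact (Nat.card_congr ConjClasses.mkEquiv.symm)

lemma three_classes_card_aux (G : Type) [Group G] [Finite G]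
    (h : Nat.card (ConjClasses G) = 3) :
    Nat.card G = 3 ∨ Nat.card G = 4 ∨ Nat.card G = 6 := by
  classical
  cases nonempty_fintype G
  have h3 : Fintype.card (ConjClasses G) = 3 := by rw [← Nat.card_eq_fintype_card]; exact h
  have hsum := sum_conjClasses_card_eq_card G
  set c1 := ConjClasses.mk (1 : G) with hc1def
  have herase : (Finset.univ.erase c1).card = 2 := by
    rw [Finset.card_erase_of_mem (Finset.mem_univ _), Finset.card_univ, h3]
  obtain ⟨x, y, hxy, hset⟩ := Finset.card_eq_two.mp herase
  have hc1 : c1.carrier.toFinset.card = 1 := by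
    have hcar : c1.carrier = {(1 : G)} := by
      ext a
      simp only [hc1def, ConjClasses.mem_carrier_iff_mk_eq, ConjClasses.mk_eq_mk_iff_isConj,
        Set.mem_singleton_iff, isConj_one_left]
    rw [Set.toFinset_card]
    refine Fintype.card_eq_one_iff.mpr ⟨⟨(1 : G), ConjClasses.mem_carrier_mk⟩, ?_⟩
    rintro ⟨a, ha⟩
    rw [hcar] at ha
    exact Subtype.ext ha
  have hdvd : ∀ z : ConjClasses G, z.carrier.toFinset.card ∣ Fintype.card G := by
    intro z
    obtain ⟨g, rfl⟩ := ConjClasses.mk_surjective z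
    rw [Set.toFinset_card]
    have horb := MulAction.card_orbit_mul_card_stabilizer_eq_card_group (ConjAct G) g
    rw [ConjAct.card] at horb
    rw [← horb]
    simp_rw [ConjAct.orbit_eq_carrier_conjClasses]
    exact Dvd.intro _ rfl
  have hpos : ∀ z : ConjClasses G, 0 < z.carrier.toFinset.card := by
    intro z
    obtain ⟨g, rfl⟩ := ConjClasses.mk_surjective z
    rw [Finset.card_pos]
    exact ⟨g, Set.mem_toFinset.mpr ConjClasses.mem_carrier_mk⟩
  have hsum' : 1 + x.carrier.toFinset.card + y.carrier.toFinset.card = Fintype.card G := by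
    rw [← hsum, ← Finset.add_sum_erase _ _ (Finset.mem_univ c1), hset,
      Finset.sum_pair hxy, hc1]
    ring
  have hres : Fintype.card G = 3 ∨ Fintype.card G = 4 ∨ Fintype.card G = 6 := by
    rcases le_total x.carrier.toFinset.card y.carrier.toFinset.card with hle | hle
    · exact arith_lemma_aux (hpos x) hle (hdvd x) (hdvd y) hsum'
    · refine arith_lemma_aux (hpos y) hle (hdvd y) (hdvd x) ?_
      rw [← hsum']; ring
  rwa [Nat.card_eq_fintype_card]

lemma order_six_nonabelian_aux (G : Type) [Group G] [Finite G] (h6 : Nat.card G = 6)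
    (hna : ¬ ∀ a b : G, a * b = b * a) : Nonempty (G ≃* Equiv.Perm (Fin 3)) := by
  classical
  cases nonempty_fintype G
  have hcard : Fintype.card G = 6 := by rwa [← Nat.card_eq_fintype_card]
  haveI : Fact (Nat.Prime 2) := ⟨Nat.prime_two⟩
  obtain ⟨t, ht⟩ := exists_prime_orderOf_dvd_card 2 (by rw [hcard]; norm_num)
  have ht1 : t ≠ 1 := by
    intro h
    rw [h, orderOf_one] at ht
    norm_num at ht
  set K : Subgroup G := zpowers t with hK
  have hKcard : Nat.card K = 2 := by rw [hK, Nat.card_zpowers, ht]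
  -- every element of K is 1 or t
  have hKelts : ∀ x : G, x ∈ K → x = 1 ∨ x = t := by
    intro x hx
    obtain ⟨n, hn⟩ := hx
    have hn' : t ^ n = x := hn
    have h2 : t ^ (n % 2) = x := by
      rw [← hn', show (2 : ℤ) = (orderOf t : ℤ) by rw [ht]; norm_num, zpow_mod_orderOf]
    have : n % 2 = 0 ∨ n % 2 = 1 := by omega
    rcases this with h | h
    · left; rw [← h2, h, zpow_zero]
    · right; rw [← h2, h, zpow_one]
  -- the normal core of K is trivial
  have hcore : K.normalCore = ⊥ := by
    by_contra hne
    obtain ⟨⟨x, hxmem⟩, hx1⟩ := (Subgroup.ne_bot_iff_exists_ne_one (H := K.normalCore)).mp hne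
    have hxK : (x : G) ∈ K := K.normalCore_le hxmem
    have hxt : (x : G) = t := by
      rcases hKelts x hxK with h | h
      · exact absurd (Subtype.ext h) hx1
      · exact h
    have htcore : t ∈ K.normalCore := hxt ▸ hxmem
    -- then t is central
    have htc : t ∈ Subgroup.center G := by
      rw [Subgroup.mem_center_iff]
      intro g
      have hconj : g * t * g⁻¹ ∈ K.normalCore :=
        Subgroup.normalCore_normal K |>.conj_mem t htcore g
      have hconjK : g * t * g⁻¹ ∈ K := K.normalCore_le hconj
      rcases hKelts _ hconjK with h | h
      · exfalso
        apply ht1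
        rw [mul_inv_eq_iff_eq_mul, one_mul] at h
        exact mul_left_cancel (a := g) (by simpa using h)
      · rw [mul_inv_eq_iff_eq_mul] at h
        exact h
    -- center is nontrivial, so G/Z is cyclic of order ≤ 3, so G abelian
    apply hna
    set Z := Subgroup.center G with hZ
    have hZ2 : 2 ≤ Nat.card Z := by
      refine (Subgroup.one_lt_card_iff_ne_bot Z).mpr ?_
      intro hbot
      rw [hbot] at htc
      exact ht1 htc
    have hquot : Nat.card (G ⧸ Z) * Nat.card Z = 6 := by
      rw [← h6, Subgroup.card_eq_card_quotient_mul_card_subgroup Z]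
    have hq3 : Nat.card (G ⧸ Z) = 1 ∨ Nat.card (G ⧸ Z) = 2 ∨ Nat.card (G ⧸ Z) = 3 := by
      have hq : Nat.card (G ⧸ Z) ∣ 6 := Dvd.intro _ hquot
      have : Nat.card (G ⧸ Z) ≤ 3 := by
        by_contra hgt
        push_neg at hgt
        nlinarith [hquot]
      interval_cases h : Nat.card (G ⧸ Z) <;> omega
    have hcyc : IsCyclic (G ⧸ Z) := by
      rcases hq3 with h | h | h
      · haveI : Subsingleton (G ⧸ Z) := (Nat.card_eq_one_iff_unique.mp h).1
        infer_instance
      · haveI : Fact (Nat.Prime 2) := ⟨Nat.prime_two⟩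
        exact isCyclic_of_prime_card h
      · haveI : Fact (Nat.Prime 3) := ⟨Nat.prime_three⟩
        exact isCyclic_of_prime_card h
    exact commutative_of_cyclic_center_quotient (QuotientGroup.mk' Z)
      (by rw [QuotientGroup.ker_mk'])
  -- the permutation action on G ⧸ K is faithful
  have hKq : Nat.card (G ⧸ K) = 3 := by
    have := Subgroup.card_eq_card_quotient_mul_card_subgroup K
    rw [h6, hKcard] at this
    omega
  let φ := MulAction.toPermHom G (G ⧸ K)
  have hinj : Function.Injective φ := by
    rw [← MonoidHom.ker_eq_bot_iff, ← Subgroup.normalCore_eq_ker, hcore]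
  let e3 : (G ⧸ K) ≃ Fin 3 := Finite.equivFinOfCardEq hKq
  let ψ : G →* Equiv.Perm (Fin 3) := (permCongrMulEquivAux e3).toMonoidHom.comp φ
  have hψinj : Function.Injective ψ :=
    (permCongrMulEquivAux e3).injective.comp hinj
  have hcards : Nat.card G = Nat.card (Equiv.Perm (Fin 3)) := by
    rw [h6, Nat.card_eq_fintype_card, Fintype.card_perm]
    decide
  exact ⟨MulEquiv.ofBijective ψ ((Nat.bijective_iff_injective_and_card ψ).mpr ⟨hψinj, hcards⟩)⟩

/-- A finite group with exactly `3` conjugacy classes is isomorphic to the cyclic group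
`ℤ/3` or to the symmetric group `S₃`; conversely, both of these groups have exactly `3`
conjugacy classes. -/
theorem stmt_2 :
    (∀ (G : Type) [Group G] [Finite G],
        Nat.card (ConjClasses G) = 3 →
          Nonempty (G ≃* Multiplicative (ZMod 3)) ∨ Nonempty (G ≃* Equiv.Perm (Fin 3))) ∧
    Nat.card (ConjClasses (Multiplicative (ZMod 3))) = 3 ∧
    Nat.card (ConjClasses (Equiv.Perm (Fin 3))) = 3 := by
  refine ⟨?_, ?_, ?_⟩
  · intro G _ _ h
    rcases three_classes_card_aux G h with h3 | h4 | h6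
    · left
      haveI : Fact (Nat.Prime 3) := ⟨Nat.prime_three⟩
      haveI : IsCyclic G := isCyclic_of_prime_card h3
      haveI : IsCyclic (Multiplicative (ZMod 3)) :=
        isCyclic_of_prime_card (p := 3) (by simp [Nat.card_eq_fintype_card])
      exact ⟨mulEquivOfCyclicCardEq (by rw [h3]; simp [Nat.card_eq_fintype_card])⟩
    · exfalso
      haveI : Fact (Nat.Prime 2) := ⟨Nat.prime_two⟩
      have hcomm := IsPGroup.commutative_of_card_eq_prime_sq (p := 2) (G := G)
        (by rw [h4]; norm_num)
      have := card_conjClasses_of_comm_aux G hcomm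
      omega
    · by_cases hcomm : ∀ a b : G, a * b = b * a
      · exfalso
        have := card_conjClasses_of_comm_aux G hcomm
        omega
      · exact Or.inr (order_six_nonabelian_aux G h6 hcomm)
  · rw [card_conjClasses_of_comm_aux (Multiplicative (ZMod 3)) (fun a b => mul_comm a b)]
    simp [Nat.card_eq_fintype_card]
  · rw [Nat.card_eq_fintype_card]
    decide
end

section
/- If G is a finite group with exactly 5 conjugacy classes, then 5 ≤ |G| ≤ 1806. -/
/-!
Dividing the class equation by `|G|` gives `1 = ∑ 1 / |C_G(g)|` over representatives of the
five classes, an Egyptian fraction decomposition of `1` with five terms in which the class of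
`1` contributes `1 / |G|`. Ordering the denominators `a ≤ b ≤ c ≤ d ≤ e`, each one is bounded
in terms of the previous ones (e.g. `1 - 1/a - 1/b ≤ 3/c`, and `1 - 1/a - 1/b ≥ 1/(ab)` when
positive), and a finite search shows the largest, `e`, is at most `1806`
(attained by `1/2 + 1/3 + 1/7 + 1/43 + 1/1806`).
-/

theorem le_mul_of_le_div_of_mul_eq_intCast {r : ℚ} {m k x : ℕ} {z : ℤ} (hm : 0 < m)
    (hr : 0 < r) (hrm : r * m = z) (hx : 0 < x) (h : r ≤ k / x) : x ≤ k * m := by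
  have hz : 0 < z := by exact_mod_cast hrm ▸ mul_pos hr (by exact_mod_cast hm)
  have hrm_ge : (1 : ℚ) ≤ r * m := by
    rw [hrm]
    exact_mod_cast hz
  rw [le_div_iff₀ (by exact_mod_cast hx)] at h
  have : (x : ℚ) ≤ k * m := by nlinarith
  exact_mod_cast this

set_option maxRecDepth 100000 in
theorem unit_fraction_remainder_search :
    ∀ a ∈ Finset.Icc (2 : ℕ) 5, ∀ b ∈ Finset.Icc a (4 * a), (1 : ℚ) - 1 / a ≤ 4 / b →
    ∀ c ∈ Finset.Icc b (3 * (a * b)), (1 : ℚ) - 1 / a - 1 / b ≤ 3 / c →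
    ∀ d ∈ Finset.Icc c (2 * (a * b * c)), (1 : ℚ) - 1 / a - 1 / b - 1 / c ≤ 2 / d →
    (0 : ℚ) < 1 - 1 / a - 1 / b - 1 / c - 1 / d →
    1 / 1806 ≤ (1 : ℚ) - 1 / a - 1 / b - 1 / c - 1 / d := by
  decide +kernel

theorem le_1806_of_sorted_unit_fractions_sum_eq_one {a b c d e : ℕ} (ha : 0 < a) (hab : a ≤ b)
    (hbc : b ≤ c) (hcd : c ≤ d) (hde : d ≤ e)
    (h : (1 : ℚ) / a + 1 / b + 1 / c + 1 / d + 1 / e = 1) :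
    e ≤ 1806 := by
  have one_div_anti : ∀ {x y : ℕ}, 0 < x → x ≤ y → (1 : ℚ) / y ≤ 1 / x := fun hx hxy =>
    one_div_le_one_div_of_le (by exact_mod_cast hx) (by exact_mod_cast hxy)
  have hb : 0 < b := ha.trans_le hab
  have hc : 0 < c := hb.trans_le hbc
  have hd : 0 < d := hc.trans_le hcd
  have he : 0 < e := hd.trans_le hde
  have hab' := one_div_anti ha hab
  have hbc' := one_div_anti hb hbc
  have hcd' := one_div_anti hc hcd
  have hde' := one_div_anti hd hde
  have he0 : (0 : ℚ) < 1 / e := by positivity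
  have ha2 : 2 ≤ a := by
    have : (1 : ℚ) / a < 1 := by linarith
    rw [div_lt_one (by exact_mod_cast ha)] at this
    exact_mod_cast this
  have p1 : (1 : ℚ) ≤ 5 / a := by rw [div_eq_mul_one_div (5 : ℚ)]; linarith
  have p2 : 1 - (1 : ℚ) / a ≤ 4 / b := by rw [div_eq_mul_one_div (4 : ℚ)]; linarith
  have p3 : 1 - (1 : ℚ) / a - 1 / b ≤ 3 / c := by rw [div_eq_mul_one_div (3 : ℚ)]; linarith
  have p4 : 1 - (1 : ℚ) / a - 1 / b - 1 / c ≤ 2 / d := by rw [div_eq_mul_one_div (2 : ℚ)]; linarith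
  have ha5 : a ≤ 5 * 1 :=
    le_mul_of_le_div_of_mul_eq_intCast (r := 1) (z := 1) one_pos one_pos (by simp) ha
      (by exact_mod_cast p1)
  have hb4 : b ≤ 4 * a :=
    le_mul_of_le_div_of_mul_eq_intCast (r := 1 - 1 / a) (z := a - 1) ha (by linarith)
      (by field_simp; push_cast; ring) hb (by exact_mod_cast p2)
  have hc3 : c ≤ 3 * (a * b) :=
    le_mul_of_le_div_of_mul_eq_intCast (r := 1 - 1 / a - 1 / b) (z := a * b - a - b)
      (by positivity) (by linarith) (by field_simp; push_cast; ring) hc (by exact_mod_cast p3)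
  have hd2 : d ≤ 2 * (a * b * c) :=
    le_mul_of_le_div_of_mul_eq_intCast (r := 1 - 1 / a - 1 / b - 1 / c)
      (z := a * b * c - b * c - a * c - a * b) (by positivity)
      (by linarith) (by field_simp; push_cast; ring) hd (by exact_mod_cast p4)
  have key := unit_fraction_remainder_search a (by simp; omega) b (by simp; omega) p2
    c (by simp; omega) p3 d (by simp; omega) p4 (by linarith)
  have : (1 : ℚ) / 1806 ≤ 1 / e := by linarith
  rw [one_div_le_one_div (by norm_num) (by exact_mod_cast he)] at this
  exact_mod_cast this

theorem le_1806_of_sum_unit_fractions_eq_one {ι : Type*} [Fintype ι] (hι : Fintype.card ι = 5)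
    {x : ι → ℕ} (hx : ∀ i, 0 < x i) (h : ∑ i, (1 : ℚ) / x i = 1) (i : ι) : x i ≤ 1806 := by
  let e := (Fintype.equivFinOfCardEq hι).symm
  let f : Fin 5 ≃ ι := (Tuple.sort (x ∘ e)).trans e
  have hmono : Monotone (x ∘ f) := Tuple.monotone_sort (x ∘ e)
  rw [← f.sum_comp, Fin.sum_univ_five] at h
  have hmax := le_1806_of_sorted_unit_fractions_sum_eq_one (hx _) (hmono (by decide))
    (hmono (by decide)) (hmono (by decide)) (hmono (by decide)) h
  calc x i = (x ∘ f) (f.symm i) := by simp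
    _ ≤ (x ∘ f) 4 := hmono (Fin.le_last _)
    _ ≤ 1806 := hmax

theorem ConjClasses.ncard_carrier_dvd {G : Type*} [Group G] [Finite G] (c : ConjClasses G) :
    c.carrier.ncard ∣ Nat.card G := by
  obtain ⟨g, rfl⟩ := ConjClasses.mk_surjective c
  rw [← ConjAct.orbit_eq_carrier_conjClasses, ← MulAction.index_stabilizer]
  exact Subgroup.index_dvd_card _

theorem ConjClasses.ncard_carrier_pos {M : Type*} [Monoid M] [Finite M] (c : ConjClasses M) :
    0 < c.carrier.ncard := by
  obtain ⟨g, rfl⟩ := ConjClasses.mk_surjective c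
  exact (Set.ncard_pos).mpr ⟨g, ConjClasses.mem_carrier_mk⟩

theorem ConjClasses.carrier_one {M : Type*} [Monoid M] :
    (ConjClasses.mk (1 : M)).carrier = {1} := by
  ext g
  simp [ConjClasses.mem_carrier_iff_mk_eq, ConjClasses.mk_eq_mk_iff_isConj]

-- `Nat.card G / c.carrier.ncard` is the order of the centralizer of any element of `c`.
theorem ConjClasses.sum_one_div_card_div_ncard_carrier (G : Type*) [Group G] [Finite G]
    [Fintype (ConjClasses G)] :
    ∑ c : ConjClasses G, (1 : ℚ) / (Nat.card G / c.carrier.ncard : ℕ) = 1 := by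
  have hG : (Nat.card G : ℚ) ≠ 0 := by exact_mod_cast Nat.card_pos.ne'
  have hterm (c : ConjClasses G) :
      (1 : ℚ) / (Nat.card G / c.carrier.ncard : ℕ) = c.carrier.ncard / Nat.card G := by
    rw [Nat.cast_div c.ncard_carrier_dvd (by exact_mod_cast c.ncard_carrier_pos.ne'), one_div_div]
  have hsum := Group.sum_card_conj_classes_eq_card G
  rw [finsum_eq_sum_of_fintype] at hsum
  simp_rw [hterm, ← Finset.sum_div, div_eq_one_iff_eq hG]
  exact_mod_cast hsum

/-- A finite group with exactly 5 conjugacy classes has order between 5 and 1806. -/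
theorem stmt_4 (G : Type) [Group G] [Finite G]
    (h : Nat.card (ConjClasses G) = 5) :
    5 ≤ Nat.card G ∧ Nat.card G ≤ 1806 := by
  refine ⟨h ▸ Nat.card_le_card_of_surjective _ ConjClasses.mk_surjective, ?_⟩
  have := Fintype.ofFinite (ConjClasses G)
  have hcard : Fintype.card (ConjClasses G) = 5 := by rwa [← Nat.card_eq_fintype_card]
  have hbound := le_1806_of_sum_unit_fractions_eq_one hcard
    (fun c => Nat.div_pos (Nat.le_of_dvd Nat.card_pos c.ncard_carrier_dvd) c.ncard_carrier_pos)
    (ConjClasses.sum_one_div_card_div_ncard_carrier G) (ConjClasses.mk 1)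
  simpa [ConjClasses.carrier_one] using hbound
end

section
/- If G is a finite group with exactly 4 conjugacy classes, then 4 ≤ |G| ≤ 42. -/
lemma aux_ord (n a b c : ℕ) (ha1 : 1 ≤ a) (hab : a ≤ b) (hbc : b ≤ c)
    (had : a ∣ n) (hbd : b ∣ n) (hcd : c ∣ n) (heq : n = 1 + a + b + c) : n ≤ 42 := by
  obtain ⟨k, hk⟩ := hcd
  by_cases hc2 : c ≤ 1
  · omega
  push_neg at hc2
  have hk2 : 2 ≤ k := by nlinarith
  have hk3 : k ≤ 3 := by nlinarith
  interval_cases k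
  · -- n = c * 2
    obtain ⟨m, hm⟩ := hbd
    have hb1 : 1 ≤ b := le_trans ha1 hab
    have hm3 : 3 ≤ m := by nlinarith
    have hm6 : m ≤ 6 := by nlinarith
    interval_cases m
    · -- n = b*3, n = 2c, c = 1+a+b -> b = 2a+2, n = 6a+6
      have hb : b = 2 * a + 2 := by omega
      have hn : n = 6 * a + 6 := by omega
      have h6 : a ∣ 6 := by
        have : a ∣ 6 * a + 6 := hn ▸ had
        exact (Nat.dvd_add_right (dvd_mul_left a 6)).mp this
      have := Nat.le_of_dvd (by norm_num) h6
      omega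
    · have hn : n = 4 * a + 4 := by omega
      have h4 : a ∣ 4 := by
        have : a ∣ 4 * a + 4 := hn ▸ had
        exact (Nat.dvd_add_right (dvd_mul_left a 4)).mp this
      have := Nat.le_of_dvd (by norm_num) h4
      omega
    · omega
    · omega
  · -- n = c * 3
    have hbc' : b = c := by omega
    have hn : n = 3 * a + 3 := by omega
    have h3 : a ∣ 3 := by
      have : a ∣ 3 * a + 3 := hn ▸ had
      exact (Nat.dvd_add_right (dvd_mul_left a 3)).mp this
    have := Nat.le_of_dvd (by norm_num) h3
    omega

lemma aux (n a b c : ℕ) (ha1 : 1 ≤ a) (hb1 : 1 ≤ b) (hc1 : 1 ≤ c)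
    (had : a ∣ n) (hbd : b ∣ n) (hcd : c ∣ n) (heq : n = 1 + a + b + c) : n ≤ 42 := by
  rcases le_total a b with h1 | h1 <;> rcases le_total b c with h2 | h2 <;>
    rcases le_total a c with h3 | h3
  · exact aux_ord n a b c ha1 h1 h2 had hbd hcd (by omega)
  · exact aux_ord n a b c ha1 h1 (by omega) had hbd hcd (by omega)
  · exact aux_ord n a c b ha1 h3 (by omega) had hcd hbd (by omega)
  · exact aux_ord n c a b hc1 (by omega) h1 hcd had hbd (by omega)
  · exact aux_ord n b a c hb1 (by omega) h3 hbd had hcd (by omega)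
  · exact aux_ord n b c a hb1 h2 h3 hbd hcd had (by omega)
  · exact aux_ord n b c a hb1 (by omega) (by omega) hbd hcd had (by omega)
  · exact aux_ord n c b a hc1 h2 (by omega) hcd hbd had (by omega)

/-- A finite group with exactly 4 conjugacy classes has order between 4 and 42. -/
theorem stmt_5 (G : Type) [Group G] [Finite G]
    (h : Nat.card (ConjClasses G) = 4) :
    4 ≤ Nat.card G ∧ Nat.card G ≤ 42 := by
  classical
  cases nonempty_fintype G
  have hsurj : Function.Surjective (ConjClasses.mk : G → ConjClasses G) :=
    fun x => x.exists_rep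
  have hlow : 4 ≤ Nat.card G := h ▸ Nat.card_le_card_of_surjective _ hsurj
  refine ⟨hlow, ?_⟩
  have hsum : ∑ x : ConjClasses G, x.carrier.toFinset.card = Fintype.card G :=
    sum_conjClasses_card_eq_card G
  have hdvd : ∀ x : ConjClasses G, x.carrier.toFinset.card ∣ Fintype.card G := by
    intro x
    obtain ⟨g, rfl⟩ := x.exists_rep
    have e1 : Fintype.card G = Fintype.card (ConjAct G) :=
      Fintype.card_congr ConjAct.toConjAct.toEquiv
    have e2 := MulAction.card_orbit_mul_card_stabilizer_eq_card_group (ConjAct G) g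
    have e3 : Fintype.card (MulAction.orbit (ConjAct G) g)
        = Fintype.card (ConjClasses.mk g).carrier :=
      Fintype.card_congr (Equiv.setCongr (ConjAct.orbit_eq_carrier_conjClasses g))
    rw [Set.toFinset_card, ← e3, e1]
    exact ⟨_, e2.symm⟩
  have hpos : ∀ x : ConjClasses G, 1 ≤ x.carrier.toFinset.card := by
    intro x
    obtain ⟨g, rfl⟩ := x.exists_rep
    have : g ∈ (ConjClasses.mk g).carrier := ConjClasses.mem_carrier_mk
    exact Finset.card_pos.mpr ⟨g, Set.mem_toFinset.mpr this⟩
  have hone : (ConjClasses.mk (1 : G)).carrier.toFinset.card = 1 := by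
    have : (ConjClasses.mk (1 : G)).carrier = {1} := by
      ext a
      simp [ConjClasses.mem_carrier_iff_mk_eq, ConjClasses.mk_eq_mk_iff_isConj]
    simp [this]
  -- extract the other three classes
  have hcard4 : Fintype.card (ConjClasses G) = 4 := by
    simpa [Nat.card_eq_fintype_card] using h
  obtain ⟨x, y, z, hxy, hxz, hyz, hS⟩ :
      ∃ x y z, x ≠ y ∧ x ≠ z ∧ y ≠ z ∧
        (Finset.univ \ {ConjClasses.mk (1 : G)} : Finset (ConjClasses G)) = {x, y, z} := by
    apply Finset.card_eq_three.mp
    rw [Finset.card_sdiff_of_subset (by simp)]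
    simp [hcard4]
  have hsplit : Fintype.card G = 1 + (x.carrier.toFinset.card + (y.carrier.toFinset.card
      + z.carrier.toFinset.card)) := by
    rw [← hsum, ← Finset.sum_sdiff (Finset.subset_univ {ConjClasses.mk (1 : G)}), hS]
    rw [Finset.sum_insert (by simp [hxy, hxz]), Finset.sum_insert (by simp [hyz]),
      Finset.sum_singleton, Finset.sum_singleton, hone]
    ring
  rw [Nat.card_eq_fintype_card]
  exact aux _ _ _ _ (hpos x) (hpos y) (hpos z) (hdvd x) (hdvd y) (hdvd z) (by omega)
end

section
/- If G is a finite group with exactly 3 conjugacy classes, then 3 ≤ |G| ≤ 6. -/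
lemma keylem_stmt6 (n a b : ℕ) (ha : 0 < a) (hab : a ≤ b)
    (hda : a ∣ n) (hdb : b ∣ n) (hsum : 1 + a + b = n) : n ≤ 6 := by
  obtain ⟨k, hk⟩ := hdb
  have hk2 : 2 ≤ k := by
    by_contra hc
    push_neg at hc
    have : b * k ≤ b * 1 := Nat.mul_le_mul_left b (by omega)
    omega
  rcases Nat.lt_or_ge k 3 with h3 | h3
  · have hk2' : k = 2 := by omega
    subst hk2'
    have h2a : n - 2 * a = 2 := by omega
    have ha2 : a ∣ 2 := h2a ▸ Nat.dvd_sub hda (dvd_mul_left a 2)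
    have := Nat.le_of_dvd (by norm_num) ha2
    omega
  · have : b * 3 ≤ b * k := Nat.mul_le_mul_left b h3
    omega

/-- A finite group with exactly 3 conjugacy classes has order between 3 and 6. -/
theorem stmt_6 (G : Type) [Group G] [Finite G]
    (h : Nat.card (ConjClasses G) = 3) :
    3 ≤ Nat.card G ∧ Nat.card G ≤ 6 := by
  classical
  cases nonempty_fintype G
  constructor
  · calc 3 = Nat.card (ConjClasses G) := h.symm
      _ ≤ Nat.card G :=
        Nat.card_le_card_of_surjective ConjClasses.mk (Quot.exists_rep)
  · rw [Nat.card_eq_fintype_card]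
    have hdvd : ∀ x : ConjClasses G, x.carrier.toFinset.card ∣ Fintype.card G := by
      intro x
      obtain ⟨g, rfl⟩ := x.exists_rep
      have key := MulAction.card_orbit_mul_card_stabilizer_eq_card_group (ConjAct G) g
      rw [ConjAct.card] at key
      have hc : (ConjClasses.mk g).carrier.toFinset.card
          = Fintype.card (MulAction.orbit (ConjAct G) g) := by
        rw [Set.toFinset_card]
        exact Fintype.card_congr (Equiv.setCongr (ConjAct.orbit_eq_carrier_conjClasses g).symm)
      rw [hc]
      exact Dvd.intro _ key
    have hpos : ∀ x : ConjClasses G, 0 < x.carrier.toFinset.card := by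
      intro x
      obtain ⟨g, rfl⟩ := x.exists_rep
      exact Finset.card_pos.mpr ⟨g, Set.mem_toFinset.mpr ConjClasses.mem_carrier_mk⟩
    have hone : (ConjClasses.mk (1:G)).carrier.toFinset.card = 1 := by
      rw [Finset.card_eq_one]
      exact ⟨1, by ext x; simp [Set.mem_toFinset, ConjClasses.mem_carrier_iff_mk_eq,
        ConjClasses.mk_eq_mk_iff_isConj, isConj_one_left]⟩
    have hsum : ∑ x : ConjClasses G, x.carrier.toFinset.card = Fintype.card G :=
      sum_conjClasses_card_eq_card G
    -- split off the class of 1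
    have hmem : ConjClasses.mk (1:G) ∈ (Finset.univ : Finset (ConjClasses G)) :=
      Finset.mem_univ _
    rw [← Finset.add_sum_erase _ _ hmem, hone] at hsum
    have hcard2 : ((Finset.univ : Finset (ConjClasses G)).erase (ConjClasses.mk 1)).card = 2 := by
      rw [Finset.card_erase_of_mem hmem, Finset.card_univ, ← Nat.card_eq_fintype_card, h]
    obtain ⟨c, d, hcd, hpair⟩ := Finset.card_eq_two.mp hcard2
    rw [hpair, Finset.sum_pair hcd] at hsum
    have hdc := hdvd c
    have hdd := hdvd d
    have hpc := hpos c
    have hpd := hpos d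
    rcases le_total c.carrier.toFinset.card d.carrier.toFinset.card with hle | hle
    · exact keylem_stmt6 _ _ _ hpc hle hdc hdd (by omega)
    · exact keylem_stmt6 _ _ _ hpd hle hdd hdc (by omega)
end

section
/- Let F be a subfield of the complex numbers and let θ ∈ ℂ be a root of unity whose minimal polynomial over F has degree 2, say X² + bX + c with b, c ∈ F. Then the constant coefficient c is itself a root of unity (in particular, c is an algebraic unit). -/
/-!
The second root `-b - θ` of the minimal polynomial of `θ` is a root of every polynomial that
`θ` satisfies, in particular of `X ^ n - 1`. By Vieta, `c` is the product of the two roots, so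
`c ^ n = 1`; a root of unity and its inverse are integral.
-/

open Polynomial

theorem pow_eq_one_of_aeval_minpoly_eq_zero {K L : Type*} [Field K] [Ring L] [Algebra K L]
    {θ x : L} {n : ℕ} (hθ : θ ^ n = 1) (hx : aeval x (minpoly K θ) = 0) : x ^ n = 1 := by
  have hdvd : minpoly K θ ∣ X ^ n - 1 := minpoly.dvd K θ (by simp [hθ])
  simpa [sub_eq_zero] using aeval_eq_zero_of_dvd_aeval_eq_zero hdvd hx

theorem aeval_neg_sub_of_aeval_quadratic {R A : Type*} [CommRing R] [CommRing A] [Algebra R A]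
    {b c : R} {x : A} (hx : aeval x (X ^ 2 + C b * X + C c) = 0) :
    aeval (-algebraMap R A b - x) (X ^ 2 + C b * X + C c) = 0 := by
  simp only [map_add, map_mul, map_pow, aeval_X, aeval_C] at hx ⊢
  linear_combination hx

theorem algebraMap_eq_mul_neg_sub_of_aeval_quadratic {R A : Type*} [CommRing R] [CommRing A]
    [Algebra R A] {b c : R} {x : A} (hx : aeval x (X ^ 2 + C b * X + C c) = 0) :
    algebraMap R A c = x * (-algebraMap R A b - x) := by
  simp only [map_add, map_mul, map_pow, aeval_X, aeval_C] at hx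
  linear_combination hx

theorem isIntegral_of_pow_eq_one {R A : Type*} [CommRing R] [Ring A] [Algebra R A] {x : A}
    {n : ℕ} (hn : 0 < n) (hx : x ^ n = 1) : IsIntegral R x :=
  IsIntegral.of_pow hn (hx ▸ isIntegral_one)

/-- If `θ ∈ ℂ` is a root of unity whose minimal polynomial over a subfield `F ⊆ ℂ` is the
quadratic `X² + bX + c`, then the constant coefficient `c` is itself a root of unity; in
particular `c` is an algebraic unit (both `c` and `c⁻¹` are integral over `ℤ`). -/
theorem stmt_7 (F : Subfield ℂ) (θ : ℂ) (b c : F)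
    (hθ : ∃ n : ℕ, 0 < n ∧ θ ^ n = 1)
    (hmin : minpoly F θ = X ^ 2 + C b * X + C c) :
    (∃ n : ℕ, 0 < n ∧ (c : ℂ) ^ n = 1) ∧
      IsIntegral ℤ (c : ℂ) ∧ IsIntegral ℤ ((c : ℂ)⁻¹) := by
  obtain ⟨n, hn, hθn⟩ := hθ
  have hroot : aeval θ (X ^ 2 + C b * X + C c) = 0 := hmin ▸ minpoly.aeval F θ
  have hconj : (-(b : ℂ) - θ) ^ n = 1 :=
    pow_eq_one_of_aeval_minpoly_eq_zero hθn (hmin ▸ aeval_neg_sub_of_aeval_quadratic hroot)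
  have hcn : (c : ℂ) ^ n = 1 := by
    rw [show (c : ℂ) = θ * (-(b : ℂ) - θ) from
      algebraMap_eq_mul_neg_sub_of_aeval_quadratic hroot, mul_pow, hθn, hconj, one_mul]
  have hcn_inv : ((c : ℂ)⁻¹) ^ n = 1 := by rw [inv_pow, hcn, inv_one]
  exact ⟨⟨n, hn, hcn⟩, isIntegral_of_pow_eq_one hn hcn, isIntegral_of_pow_eq_one hn hcn_inv⟩
end

section
/- If n₁, n₂, n₃, n₄, n₅ are positive integers with 1/n₁ + 1/n₂ + 1/n₃ + 1/n₄ + 1/n₅ = 1, then nᵢ ≤ 1806 for every i. -/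
/-! The four reciprocals other than `1/nᵢ` sum to less than `1`, and the largest sum of four unit
fractions below `1` is `1/2 + 1/3 + 1/7 + 1/43 = 1805/1806` (Curtiss), hence `1/nᵢ ≥ 1/1806`.
For sorted denominators that bound is a finite search: once the earlier terms are fixed, with
reciprocal sum `σ`, the next denominator `x` is bounded below by `σ + 1/x < 1` and, the `k` terms
from `x` on being at most `1/x` each, bounded above by `k/x > 1805/1806 - σ`. -/

section Floor

variable {K : Type*} [Field K] [LinearOrder K] [IsStrictOrderedRing K] [FloorSemiring K]

theorem lt_ceil_div_of_lt_mul_inv {n : ℕ} {k q : K} (hq : 0 < q) (h : q < k * (n : K)⁻¹) :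
    n < ⌈k / q⌉₊ := by
  rcases Nat.eq_zero_or_pos n with rfl | hn
  · simp only [Nat.cast_zero, inv_zero, mul_zero] at h
    exact absurd hq h.not_gt
  rw [← div_eq_mul_inv, lt_div_iff₀ (by exact_mod_cast hn)] at h
  rw [Nat.lt_ceil, lt_div_iff₀ hq]
  linarith

theorem floor_inv_lt_of_inv_lt {n : ℕ} {r : K} (hn : 0 < n) (h : (n : K)⁻¹ < r) :
    ⌊r⁻¹⌋₊ < n := by
  have hn' : (0 : K) < n := by exact_mod_cast hn
  have hr : 0 < r := (inv_pos.2 hn').trans h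
  exact (Nat.floor_lt (inv_pos.2 hr).le).2 ((inv_lt_comm₀ hn' hr).1 h)

end Floor

theorem inv_add_inv_add_inv_add_inv_le_of_lt_one {a b c d : ℕ} (ha : 0 < a) (hab : a ≤ b)
    (hbc : b ≤ c) (hcd : c ≤ d)
    (h : (a : ℚ)⁻¹ + (b : ℚ)⁻¹ + (c : ℚ)⁻¹ + (d : ℚ)⁻¹ < 1) :
    (a : ℚ)⁻¹ + (b : ℚ)⁻¹ + (c : ℚ)⁻¹ + (d : ℚ)⁻¹ ≤ 1805 / 1806 := by
  by_contra! hS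
  have hb : 0 < b := ha.trans_le hab
  have hc : 0 < c := hb.trans_le hbc
  have hd : 0 < d := hc.trans_le hcd
  have iab : (b : ℚ)⁻¹ ≤ (a : ℚ)⁻¹ := inv_anti₀ (by positivity) (by exact_mod_cast hab)
  have ibc : (c : ℚ)⁻¹ ≤ (b : ℚ)⁻¹ := inv_anti₀ (by positivity) (by exact_mod_cast hbc)
  have icd : (d : ℚ)⁻¹ ≤ (c : ℚ)⁻¹ := inv_anti₀ (by positivity) (by exact_mod_cast hcd)
  have pb : (0 : ℚ) < (b : ℚ)⁻¹ := by positivity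
  have pc : (0 : ℚ) < (c : ℚ)⁻¹ := by positivity
  have pd : (0 : ℚ) < (d : ℚ)⁻¹ := by positivity
  have ha_lo := floor_inv_lt_of_inv_lt (r := (1 : ℚ)) ha (by linarith)
  have hb_lo := floor_inv_lt_of_inv_lt (r := 1 - (a : ℚ)⁻¹) hb (by linarith)
  have hc_lo := floor_inv_lt_of_inv_lt (r := 1 - (a : ℚ)⁻¹ - (b : ℚ)⁻¹) hc (by linarith)
  have hd_lo :=
    floor_inv_lt_of_inv_lt (r := 1 - (a : ℚ)⁻¹ - (b : ℚ)⁻¹ - (c : ℚ)⁻¹) hd (by linarith)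
  have ha_hi := lt_ceil_div_of_lt_mul_inv (k := (4 : ℚ)) (by norm_num : (0 : ℚ) < 1805 / 1806)
    (show _ < _ * (a : ℚ)⁻¹ by linarith)
  have hb_hi (hq : 0 < 1805 / 1806 - (a : ℚ)⁻¹) :=
    lt_ceil_div_of_lt_mul_inv (k := (3 : ℚ)) hq (show _ < _ * (b : ℚ)⁻¹ by linarith)
  have hc_hi (hq : 0 < 1805 / 1806 - (a : ℚ)⁻¹ - (b : ℚ)⁻¹) :=
    lt_ceil_div_of_lt_mul_inv (k := (2 : ℚ)) hq (show _ < _ * (c : ℚ)⁻¹ by linarith)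
  have hd_hi (hq : 0 < 1805 / 1806 - (a : ℚ)⁻¹ - (b : ℚ)⁻¹ - (c : ℚ)⁻¹) :=
    lt_ceil_div_of_lt_mul_inv (k := (1 : ℚ)) hq (show _ < _ * (d : ℚ)⁻¹ by linarith)
  norm_num at ha_lo ha_hi
  interval_cases a <;> norm_num at hb_lo hb_hi <;>
    interval_cases b <;> norm_num at hc_lo hc_hi <;>
    interval_cases c <;> norm_num at hd_lo hd_hi <;> omega

theorem Multiset.sum_map_inv_le_of_lt_one {s : Multiset ℕ} (hcard : card s = 4)
    (hpos : ∀ n ∈ s, 0 < n) (h : (s.map fun n : ℕ => (n : ℚ)⁻¹).sum < 1) :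
    (s.map fun n : ℕ => (n : ℚ)⁻¹).sum ≤ 1805 / 1806 := by
  obtain ⟨a, b, c, d, hl⟩ := List.length_eq_four.1 ((s.length_sort (· ≤ ·)).trans hcard)
  have hsorted := s.pairwise_sort (· ≤ ·)
  rw [← s.sort_eq (· ≤ ·), hl] at hpos h ⊢
  rw [hl] at hsorted
  simp only [List.pairwise_cons, List.mem_cons, List.not_mem_nil] at hsorted
  simp only [Multiset.mem_coe, List.mem_cons] at hpos
  simp only [Multiset.map_coe, Multiset.sum_coe, List.map_cons, List.map_nil, List.sum_cons,
    List.sum_nil, add_zero, ← add_assoc] at h ⊢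
  exact inv_add_inv_add_inv_add_inv_le_of_lt_one (hpos a (by simp)) (hsorted.1 b (by simp))
    (hsorted.2.1 c (by simp)) (hsorted.2.2.1 d (by simp)) h

theorem Multiset.le_of_sum_map_inv_eq_one {s : Multiset ℕ} (hcard : card s = 5)
    (hpos : ∀ n ∈ s, 0 < n) (h : (s.map fun n : ℕ => (n : ℚ)⁻¹).sum = 1) : ∀ n ∈ s, n ≤ 1806 := by
  intro n hn
  have hn_pos : (0 : ℚ) < n := by exact_mod_cast hpos n hn
  have hsplit := Multiset.sum_map_erase (f := fun n : ℕ => (n : ℚ)⁻¹) hn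
  have hrest := Multiset.sum_map_inv_le_of_lt_one (s := s.erase n) (by simp [hcard, hn])
    (fun m hm => hpos m (Multiset.mem_of_mem_erase hm)) (by linarith [inv_pos.2 hn_pos])
  have hinv : (1806 : ℚ)⁻¹ ≤ (n : ℚ)⁻¹ := by linarith
  exact_mod_cast (inv_le_inv₀ (by norm_num) hn_pos).1 hinv

/-- If `n₁, …, n₅` are positive integers whose reciprocals sum to `1`,
then each `nᵢ` is at most `1806`. -/
theorem stmt_15 (n₁ n₂ n₃ n₄ n₅ : ℕ)
    (h₁ : 0 < n₁) (h₂ : 0 < n₂) (h₃ : 0 < n₃) (h₄ : 0 < n₄) (h₅ : 0 < n₅)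
    (h : (n₁ : ℚ)⁻¹ + (n₂ : ℚ)⁻¹ + (n₃ : ℚ)⁻¹ + (n₄ : ℚ)⁻¹ + (n₅ : ℚ)⁻¹ = 1) :
    n₁ ≤ 1806 ∧ n₂ ≤ 1806 ∧ n₃ ≤ 1806 ∧ n₄ ≤ 1806 ∧ n₅ ≤ 1806 := by
  set s : Multiset ℕ := {n₁, n₂, n₃, n₄, n₅}
  have hpos : ∀ n ∈ s, 0 < n := by
    simp only [s, Multiset.insert_eq_cons, Multiset.mem_cons, Multiset.mem_singleton]
    rintro n (rfl | rfl | rfl | rfl | rfl) <;> assumption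
  have hsum : (s.map fun n : ℕ => (n : ℚ)⁻¹).sum = 1 := by
    simp only [s, Multiset.insert_eq_cons, Multiset.map_cons, Multiset.map_singleton,
      Multiset.sum_cons, Multiset.sum_singleton]
    linarith
  have hle := Multiset.le_of_sum_map_inv_eq_one rfl hpos hsum
  exact ⟨hle _ (by simp [s]), hle _ (by simp [s]), hle _ (by simp [s]),
    hle _ (by simp [s]), hle _ (by simp [s])⟩
end
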